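/- Let g : M → N be a Λ-homomorphism of Λ-modules such that ker g is p-primary. Let f : M(p) → N(p) denote the restriction of g to the p-primary submodules and let h : M_f → N_f denote the induced map on the p-free quotients. Then h is injective, ker f = ker g, and there is a short exact sequence 0 → coker f → coker g → coker h → 0. -/
import Mathlib


/-- The `p`-primary submodule `M(p) = {m ∈ M : pᵏ • m = 0 for some k}`, where `p` acts via the
central element `p·1_Λ`. -/
def pPrimarySub (Λ : Type) [Ring Λ] (p : ℕ) (M : Type) [AddCommGroup M] [Module Λ M] :
    Submodule Λ M where
  carrier := {m | ∃ k : ℕ, ((p : Λ) ^ k) • m = 0}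
  zero_mem' := ⟨0, by simp⟩
  add_mem' := by
    rintro a b ⟨k, hk⟩ ⟨l, hl⟩
    refine ⟨k + l, ?_⟩
    have h1 : ((p : Λ) ^ (k + l)) • a = 0 := by
      rw [add_comm, pow_add, mul_smul, hk, smul_zero]
    have h2 : ((p : Λ) ^ (k + l)) • b = 0 := by
      rw [pow_add, mul_smul, hl, smul_zero]
    rw [smul_add, h1, h2, add_zero]
  smul_mem' := by
    rintro c m ⟨k, hk⟩
    refine ⟨k, ?_⟩
    have hcomm : (p : Λ) ^ k * c = c * (p : Λ) ^ k := ((Nat.cast_commute p c).pow_left k).eq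
    rw [smul_smul, hcomm, mul_smul, hk, smul_zero]

theorem mem_pPrimarySub {Λ : Type} [Ring Λ] {p : ℕ} {M : Type} [AddCommGroup M] [Module Λ M]
    (m : M) : m ∈ pPrimarySub Λ p M ↔ ∃ k : ℕ, ((p : Λ) ^ k) • m = 0 := Iff.rfl

section

variable {Λ : Type} [Ring Λ] (p : ℕ) {M N : Type} [AddCommGroup M] [Module Λ M]
  [AddCommGroup N] [Module Λ N]

theorem pPrimary_le_comap (g : M →ₗ[Λ] N) :
    pPrimarySub Λ p M ≤ (pPrimarySub Λ p N).comap g := by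
  rintro m ⟨k, hk⟩
  exact ⟨k, by rw [← map_smul, hk, map_zero]⟩

/-- The restriction `f : M(p) → N(p)` of `g` to the `p`-primary submodules. -/
noncomputable def fRes (g : M →ₗ[Λ] N) : pPrimarySub Λ p M →ₗ[Λ] pPrimarySub Λ p N :=
  g.restrict fun x hx => pPrimary_le_comap p g hx

/-- The induced map `h : M_f → N_f` on the `p`-free quotients. -/
noncomputable def hInd (g : M →ₗ[Λ] N) :
    (M ⧸ pPrimarySub Λ p M) →ₗ[Λ] (N ⧸ pPrimarySub Λ p N) :=
  Submodule.mapQ _ _ g (pPrimary_le_comap p g)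

/-- The natural map `coker f → coker g` induced by the inclusion `N(p) → N`. -/
noncomputable def cokerIncl (g : M →ₗ[Λ] N) :
    ((pPrimarySub Λ p N) ⧸ LinearMap.range (fRes p g)) →ₗ[Λ] (N ⧸ LinearMap.range g) :=
  Submodule.liftQ _ ((LinearMap.range g).mkQ ∘ₗ (pPrimarySub Λ p N).subtype) (by
    rintro x ⟨y, rfl⟩
    rw [LinearMap.mem_ker, LinearMap.comp_apply]
    have hy : ((pPrimarySub Λ p N).subtype) ((fRes p g) y) =
        g ((pPrimarySub Λ p M).subtype y) := rfl
    rw [hy, Submodule.mkQ_apply, Submodule.Quotient.mk_eq_zero]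
    exact LinearMap.mem_range_self g _)

/-- The natural map `coker g → coker h` induced by the projection `N → N/N(p)`. -/
noncomputable def cokerProj (g : M →ₗ[Λ] N) :
    (N ⧸ LinearMap.range g) →ₗ[Λ]
      ((N ⧸ pPrimarySub Λ p N) ⧸ LinearMap.range (hInd p g)) :=
  Submodule.liftQ _ ((LinearMap.range (hInd p g)).mkQ ∘ₗ (pPrimarySub Λ p N).mkQ) (by
    rintro x ⟨y, rfl⟩
    rw [LinearMap.mem_ker, LinearMap.comp_apply, Submodule.mkQ_apply, Submodule.mkQ_apply,
      Submodule.Quotient.mk_eq_zero]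
    exact ⟨Submodule.Quotient.mk y, Submodule.mapQ_apply _ _ _ _⟩)

/-- If `g : M → N` has `p`-primary kernel, then the induced map `h` on the
`p`-free quotients is injective, `ker f = ker g` (under the inclusion `M(p) ⊆ M`), and the
natural maps give a short exact sequence `0 → coker f → coker g → coker h → 0`. -/
theorem hInd_injective_and_ker_eq_and_coker_exact
    (hp : p.Prime) (g : M →ₗ[Λ] N)
    (hker : ∀ m ∈ LinearMap.ker g, ∃ k : ℕ, ((p : Λ) ^ k) • m = 0) :
    Function.Injective (hInd p g) ∧
      Submodule.map (pPrimarySub Λ p M).subtype (LinearMap.ker (fRes p g)) =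
        LinearMap.ker g ∧
      Function.Injective (cokerIncl p g) ∧
      Function.Surjective (cokerProj p g) ∧
      LinearMap.range (cokerIncl p g) = LinearMap.ker (cokerProj p g) := by
  -- key: if g m ∈ N(p) then m ∈ M(p)
  have key : ∀ m : M, g m ∈ pPrimarySub Λ p N → m ∈ pPrimarySub Λ p M := by
    rintro m ⟨k, hk⟩
    have hmem : ((p : Λ) ^ k) • m ∈ LinearMap.ker g := by
      rw [LinearMap.mem_ker, map_smul, hk]
    obtain ⟨l, hl⟩ := hker _ hmem
    exact ⟨l + k, by rw [pow_add, mul_smul, hl]⟩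
  refine ⟨?_, ?_, ?_, ?_, ?_⟩
  · -- hInd injective
    rw [← LinearMap.ker_eq_bot, eq_bot_iff]
    rintro x hx
    obtain ⟨m, rfl⟩ := Submodule.Quotient.mk_surjective _ x
    rw [LinearMap.mem_ker, hInd, Submodule.mapQ_apply, Submodule.Quotient.mk_eq_zero] at hx
    rw [Submodule.mem_bot, Submodule.Quotient.mk_eq_zero]
    exact key m hx
  · -- ker f = ker g
    apply le_antisymm
    · rintro x ⟨y, hy, rfl⟩
      have : g ((pPrimarySub Λ p M).subtype y) = ((pPrimarySub Λ p N).subtype) (fRes p g y) :=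
        rfl
      rw [LinearMap.mem_ker, this, hy, map_zero]
    · intro m hm
      have hmp : m ∈ pPrimarySub Λ p M := hker m hm
      exact ⟨⟨m, hmp⟩, Subtype.ext hm, rfl⟩
  · -- cokerIncl injective
    rw [← LinearMap.ker_eq_bot, eq_bot_iff]
    rintro x hx
    obtain ⟨n, rfl⟩ := Submodule.Quotient.mk_surjective _ x
    rw [LinearMap.mem_ker, cokerIncl, Submodule.liftQ_apply, LinearMap.comp_apply,
      Submodule.mkQ_apply, Submodule.Quotient.mk_eq_zero] at hx
    obtain ⟨m, hm⟩ := hx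
    rw [Submodule.mem_bot, Submodule.Quotient.mk_eq_zero]
    have hmp : m ∈ pPrimarySub Λ p M := key m (hm ▸ n.2)
    exact ⟨⟨m, hmp⟩, Subtype.ext hm⟩
  · -- cokerProj surjective
    intro x
    obtain ⟨y, rfl⟩ := Submodule.Quotient.mk_surjective _ x
    obtain ⟨n, rfl⟩ := Submodule.Quotient.mk_surjective _ y
    exact ⟨Submodule.Quotient.mk n, rfl⟩
  · -- range = ker
    apply le_antisymm
    · rintro x ⟨y, rfl⟩
      obtain ⟨n, rfl⟩ := Submodule.Quotient.mk_surjective _ y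
      rw [LinearMap.mem_ker]
      have h1 : cokerIncl p g (Submodule.Quotient.mk n) =
          Submodule.Quotient.mk n.1 := rfl
      rw [h1]
      show ((LinearMap.range (hInd p g)).mkQ ∘ₗ (pPrimarySub Λ p N).mkQ) n.1 = 0
      rw [LinearMap.comp_apply, Submodule.mkQ_apply, Submodule.mkQ_apply]
      have : (Submodule.Quotient.mk n.1 : N ⧸ pPrimarySub Λ p N) = 0 :=
        (Submodule.Quotient.mk_eq_zero _).2 n.2
      rw [this]
      simp
    · intro x hx
      obtain ⟨n, rfl⟩ := Submodule.Quotient.mk_surjective _ x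
      rw [LinearMap.mem_ker, cokerProj, Submodule.liftQ_apply, LinearMap.comp_apply,
        Submodule.mkQ_apply, Submodule.mkQ_apply, Submodule.Quotient.mk_eq_zero] at hx
      obtain ⟨y, hy⟩ := hx
      obtain ⟨m, rfl⟩ := Submodule.Quotient.mk_surjective _ y
      rw [hInd, Submodule.mapQ_apply, Submodule.Quotient.eq] at hy
      have hy' : n - g m ∈ pPrimarySub Λ p N := by
        have := (pPrimarySub Λ p N).neg_mem hy
        rwa [neg_sub] at this
      refine ⟨Submodule.Quotient.mk ⟨n - g m, hy'⟩, ?_⟩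
      rw [cokerIncl, Submodule.liftQ_apply, LinearMap.comp_apply, Submodule.mkQ_apply]
      show (Submodule.Quotient.mk (n - g m) : N ⧸ LinearMap.range g) = Submodule.Quotient.mk n
      rw [Submodule.Quotient.eq]
      simp

end
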